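/- Let A be a finite-dimensional algebra over a field and f an idempotent of A admitting a short exact sequence of left A-modules 0 → A(1−e) → P → A/⟨f⟩ → 0 with P ∈ add(Ae) for some idempotent e, and suppose Ext^1_A(A/⟨f⟩, Ae) = 0 and Ext^1_A(A/⟨f⟩, A/⟨f⟩) = 0. Then the A-module T = Ae ⊕ A/⟨f⟩ is a tilting module: projdim_A(T) ≤ 1, Ext^1_A(T,T) = 0, and there is a short exact sequence 0 → A → T_0 → T_1 → 0 with T_0, T_1 ∈ add(T). -/

import Mathlib

/-!
`T = Ae ⊕ A/⟨f⟩` has the projective resolution `0 → A(1-e) → Ae ⊕ P → T → 0`, so its projective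
dimension is at most one. On a resolution `0 → K → Q → M → 0` by projectives, `Ext¹(M, Y) = 0`
says exactly that every map `K → Y` extends to `Q`. Since `A(1-e) → Ae ⊕ P` factors through `P`,
the vanishing of `Ext¹(A/⟨f⟩, Ae)` and `Ext¹(A/⟨f⟩, A/⟨f⟩)` gives `Ext¹(T, T) = 0`. Finally the
Peirce decomposition `A ≅ Ae ⊕ A(1-e)` and the given sequence combine into
`0 → A → Ae ⊕ P → A/⟨f⟩ → 0`, whose last two terms lie in `add T`.
-/

open CategoryTheory

noncomputable section

/-- Vanishing of the `n`-th Ext group of two `A`-modules. -/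
def ExtVanish (A : Type) [Ring A] (n : ℕ) (X Y : ModuleCat.{0} A) : Prop :=
  Limits.IsZero (((Ext ℤ (ModuleCat.{0} A) n).obj (Opposite.op X)).obj Y)

/-- `M` belongs to `add X`: it is a direct summand of a finite direct sum of copies of `X`. -/
def InAdd (A : Type) [Ring A] (X M : ModuleCat.{0} A) : Prop :=
  ∃ (n : ℕ) (i : M →ₗ[A] (Fin n → X)) (p : (Fin n → X) →ₗ[A] M),
    p.comp i = LinearMap.id

/-- `N` is a (first) syzygy of `M`: there is an exact sequence `0 → N → P → M → 0`
with `P` projective. -/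
def IsSyzygyOf (A : Type) [Ring A] (N M : ModuleCat.{0} A) : Prop :=
  ∃ (P : ModuleCat.{0} A), Module.Projective A P ∧
    ∃ (ι : N →ₗ[A] P) (π : P →ₗ[A] M),
      Function.Injective ι ∧ Function.Surjective π ∧ Function.Exact ι π

/-- `N` is an `n`-th syzygy of `M`. -/
def IsNthSyzygyOf (A : Type) [Ring A] : ℕ → ModuleCat.{0} A → ModuleCat.{0} A → Prop
  | 0, N, M => Nonempty (N ≅ M)
  | n + 1, N, M => ∃ K : ModuleCat.{0} A, IsSyzygyOf A K M ∧ IsNthSyzygyOf A n N K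

/-- `N` is a (first) cosyzygy of `M`: there is an exact sequence `0 → M → I → N → 0`
with `I` injective. -/
def IsCosyzygyOf (A : Type) [Ring A] (N M : ModuleCat.{0} A) : Prop :=
  ∃ (I : ModuleCat.{0} A), Module.Injective A I ∧
    ∃ (ι : M →ₗ[A] I) (π : I →ₗ[A] N),
      Function.Injective ι ∧ Function.Surjective π ∧ Function.Exact ι π

/-- `N` is an `n`-th cosyzygy of `M`. -/
def IsNthCosyzygyOf (A : Type) [Ring A] : ℕ → ModuleCat.{0} A → ModuleCat.{0} A → Prop
  | 0, N, M => Nonempty (N ≅ M)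
  | n + 1, N, M => ∃ K : ModuleCat.{0} A, IsCosyzygyOf A K M ∧ IsNthCosyzygyOf A n N K

/-- The projective dimension of `M` is at most `n`. -/
def ProjDimLE (A : Type) [Ring A] (n : ℕ) (M : ModuleCat.{0} A) : Prop :=
  ∃ K : ModuleCat.{0} A, IsNthSyzygyOf A n K M ∧ Module.Projective A K

/-- The injective dimension of `M` is at most `n`. -/
def InjDimLE (A : Type) [Ring A] (n : ℕ) (M : ModuleCat.{0} A) : Prop :=
  ∃ K : ModuleCat.{0} A, IsNthCosyzygyOf A n K M ∧ Module.Injective A K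

/-- The underlying type of `D(A) = Hom_k(A, k)`. -/
def DualMod (k A : Type) [Field k] [Ring A] [Algebra k A] : Type := A →ₗ[k] k

instance (k A : Type) [Field k] [Ring A] [Algebra k A] : AddCommGroup (DualMod k A) :=
  inferInstanceAs (AddCommGroup (A →ₗ[k] k))

/-- Auxiliary scalar action for `DualMod`. -/
def dualSMul (k A : Type) [Field k] [Ring A] [Algebra k A] (a : A) (φ : A →ₗ[k] k) :
    A →ₗ[k] k := φ.comp (LinearMap.mulRight k a)

/-- The left `A`-module structure on `D(A)`: `(a • φ) x = φ (x * a)`. -/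
instance (k A : Type) [Field k] [Ring A] [Algebra k A] : Module A (DualMod k A) where
  smul a φ := dualSMul k A a φ
  one_smul φ := by
    show dualSMul k A 1 φ = φ
    unfold dualSMul; ext x
    change @DFunLike.coe (A →ₗ[k] k) A (fun _ => k) _ φ (x * 1) = @DFunLike.coe (A →ₗ[k] k) A (fun _ => k) _ φ x
    rw [mul_one]
  mul_smul a b φ := by
    show dualSMul k A (a * b) φ = dualSMul k A a (dualSMul k A b φ)
    unfold dualSMul; ext x
    change @DFunLike.coe (A →ₗ[k] k) A (fun _ => k) _ φ (x * (a * b)) = @DFunLike.coe (A →ₗ[k] k) A (fun _ => k) _ φ (x * a * b)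
    rw [mul_assoc]
  smul_zero a := by
    show dualSMul k A a 0 = 0
    unfold dualSMul; ext x; simp
  smul_add a φ ψ := by
    show dualSMul k A a (φ + ψ) = dualSMul k A a φ + dualSMul k A a ψ
    unfold dualSMul; ext x; rfl
  add_smul a b φ := by
    show dualSMul k A (a + b) φ = dualSMul k A a φ + dualSMul k A b φ
    unfold dualSMul; ext x
    change @DFunLike.coe (A →ₗ[k] k) A (fun _ => k) _ φ (x * (a + b)) = @DFunLike.coe (A →ₗ[k] k) A (fun _ => k) _ φ (x * a) + @DFunLike.coe (A →ₗ[k] k) A (fun _ => k) _ φ (x * b)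
    rw [mul_add]
    exact LinearMap.map_add _ _ _
  zero_smul φ := by
    show dualSMul k A 0 φ = 0
    unfold dualSMul; ext x
    change @DFunLike.coe (A →ₗ[k] k) A (fun _ => k) _ φ (x * 0) = 0
    rw [mul_zero]
    exact LinearMap.map_zero _

/-- `D(A)`, the dual of the right regular module, as an object of `ModuleCat A`. -/
def DualA (k A : Type) [Field k] [Ring A] [Algebra k A] : ModuleCat.{0} A :=
  ModuleCat.of A (DualMod k A)

/-- The idempotent ideal `⟨e⟩ = AeA`, as a left submodule of `A`. -/
def idemIdeal (A : Type) [Ring A] (e : A) : Submodule A A :=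
  Submodule.span A (Set.range fun b : A => e * b)

/-- The quotient `A/⟨e⟩` as a left `A`-module. -/
def quotMod (A : Type) [Ring A] (e : A) : ModuleCat.{0} A :=
  ModuleCat.of A (A ⧸ idemIdeal A e)

/-- The left ideal `Ae = {x | x * e = x}` (for `e` idempotent), as a submodule of `A`. -/
def leftPart (A : Type) [Ring A] (e : A) : Submodule A A where
  carrier := {x | x * e = x}
  add_mem' := by intro a b ha hb; simp only [Set.mem_setOf_eq] at *; rw [add_mul, ha, hb]
  zero_mem' := by simp
  smul_mem' := by intro c x hx; simp only [Set.mem_setOf_eq, smul_eq_mul] at *;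
                  rw [mul_assoc, hx]

/-- `Ae` as an object of `ModuleCat A`. -/
def AeMod (A : Type) [Ring A] (e : A) : ModuleCat.{0} A :=
  ModuleCat.of A (leftPart A e)

/-- `M` is Gorenstein projective: `Ext^i_A(M, A) = 0` for all `i > 0`. -/
def IsGorensteinProjective (A : Type) [Ring A] (M : ModuleCat.{0} A) : Prop :=
  ∀ i : ℕ, 0 < i → ExtVanish A i M (ModuleCat.of A A)

/-- `M` is Gorenstein injective: `Ext^i_A(D(A), M) = 0` for all `i > 0`. -/
def IsGorensteinInjective (k A : Type) [Field k] [Ring A] [Algebra k A]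
    (M : ModuleCat.{0} A) : Prop :=
  ∀ i : ℕ, 0 < i → ExtVanish A i (DualA k A) M

/-- `M ∈ gen_l(Ae)`: `M` has a projective resolution whose terms in degrees `≤ l`
lie in `add (Ae)`. -/
def GenLE (A : Type) [Ring A] (e : A) (l : ℕ) (M : ModuleCat.{0} A) : Prop :=
  ∃ (P : ℕ → ModuleCat.{0} A) (d : ∀ n : ℕ, (P (n + 1) →ₗ[A] P n)) (π : P 0 →ₗ[A] M),
    (∀ n, Module.Projective A (P n)) ∧
    Function.Surjective π ∧
    Function.Exact (d 0) π ∧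
    (∀ n, Function.Exact (d (n + 1)) (d n)) ∧
    (∀ n ≤ l, InAdd A (AeMod A e) (P n))

/-- The left ideal `A(1-e) = {x | x * e = 0}`, as a submodule of `A`. -/
def leftPartC (A : Type) [Ring A] (e : A) : Submodule A A where
  carrier := {x | x * e = 0}
  add_mem' := by
    intro a b ha hb
    simp only [Set.mem_setOf_eq] at *
    rw [add_mul, ha, hb, add_zero]
  zero_mem' := by simp
  smul_mem' := by
    intro c x hx
    simp only [Set.mem_setOf_eq, smul_eq_mul] at *
    rw [mul_assoc, hx, mul_zero]

open Limits Function

section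

variable {A : Type} [Ring A]

namespace IsIdempotentElem

variable {e : A}

def toLeftPart (he : IsIdempotentElem e) : A →ₗ[A] leftPart A e :=
  LinearMap.codRestrict (leftPart A e) (LinearMap.toSpanSingleton A A e)
    fun a => show a * e * e = a * e by rw [mul_assoc, he.eq]

def toLeftPartC (he : IsIdempotentElem e) : A →ₗ[A] leftPartC A e :=
  LinearMap.codRestrict (leftPartC A e) (LinearMap.id - LinearMap.toSpanSingleton A A e)
    fun a => show (a - a * e) * e = 0 by rw [sub_mul, mul_assoc, he.eq, sub_self]

/-- The Peirce decomposition `a ↦ (a e, a - a e)`. -/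
def peirceEquiv (he : IsIdempotentElem e) : A ≃ₗ[A] leftPart A e × leftPartC A e where
  __ := he.toLeftPart.prod he.toLeftPartC
  invFun x := x.1 + x.2
  left_inv a := show a * e + (a - a * e) = a from add_sub_cancel _ _
  right_inv := by
    rintro ⟨⟨x, hx : x * e = x⟩, ⟨y, hy : y * e = 0⟩⟩
    have hxy : (x + y) * e = x := by rw [add_mul, hx, hy, add_zero]
    exact Prod.ext (Subtype.ext hxy)
      (Subtype.ext (show x + y - (x + y) * e = y by rw [hxy, add_sub_cancel_left]))

theorem projective_leftPart (he : IsIdempotentElem e) : Module.Projective A (leftPart A e) :=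
  .of_split (he.peirceEquiv.symm.toLinearMap ∘ₗ LinearMap.inl A _ _)
    (LinearMap.fst A _ _ ∘ₗ he.peirceEquiv.toLinearMap) (by ext; simp)

theorem projective_leftPartC (he : IsIdempotentElem e) : Module.Projective A (leftPartC A e) :=
  .of_split (he.peirceEquiv.symm.toLinearMap ∘ₗ LinearMap.inr A _ _)
    (LinearMap.snd A _ _ ∘ₗ he.peirceEquiv.toLinearMap) (by ext; simp)

end IsIdempotentElem

section Exact

variable {K M N X : Type} [AddCommGroup K] [Module A K] [AddCommGroup M] [Module A M]
  [AddCommGroup N] [Module A N] [AddCommGroup X] [Module A X] {f : K →ₗ[A] M} {g : M →ₗ[A] N}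

theorem Function.Exact.inr_comp_prodMap_id (h : Exact f g) :
    Exact (LinearMap.inr A X M ∘ₗ f) (LinearMap.prodMap LinearMap.id g) := by
  rintro ⟨x, m⟩
  constructor
  · intro hxm
    obtain ⟨k, rfl⟩ := (h m).1 (congrArg Prod.snd hxm)
    exact ⟨k, by simp [show x = 0 from congrArg Prod.fst hxm]⟩
  · rintro ⟨k, hk⟩
    obtain ⟨rfl, rfl⟩ := Prod.mk.inj hk
    simp [h.apply_apply_eq_zero]

theorem Function.Exact.prodMap_id_snd_comp (h : Exact f g) :
    Exact (LinearMap.prodMap (LinearMap.id : X →ₗ[A] X) f) (g ∘ₗ LinearMap.snd A X M) := by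
  rintro ⟨x, m⟩
  constructor
  · intro hm
    obtain ⟨k, rfl⟩ := (h m).1 hm
    exact ⟨(x, k), rfl⟩
  · rintro ⟨⟨x', k⟩, hk⟩
    obtain ⟨rfl, rfl⟩ := Prod.mk.inj hk
    exact h.apply_apply_eq_zero k

end Exact

namespace InAdd

variable {X Y M N : ModuleCat.{0} A}

theorem projective (hX : Module.Projective A X) (h : InAdd A X M) : Module.Projective A M := by
  obtain ⟨n, i, p, hpi⟩ := h
  have : Module.Projective A (Fin n → X) :=
    .of_equiv (DFinsupp.linearEquivFunOnFintype (R := A) (M := fun _ : Fin n => X))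
  exact .of_split i p hpi

theorem of_finite {ι : Type} [Finite ι] (i : M →ₗ[A] ι → X) (p : (ι → X) →ₗ[A] M)
    (h : p ∘ₗ i = LinearMap.id) : InAdd A X M := by
  obtain ⟨n, ⟨σ⟩⟩ := Finite.exists_equiv_fin ι
  let E := LinearEquiv.funCongrLeft A X σ
  refine ⟨n, E.symm.toLinearMap ∘ₗ i, p ∘ₗ E.toLinearMap, ?_⟩
  ext m
  simpa using LinearMap.congr_fun h m

theorem self (X : ModuleCat.{0} A) : InAdd A X X :=
  of_finite (ι := Unit) (LinearMap.pi fun _ => LinearMap.id) (LinearMap.proj ()) rfl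

theorem of_retract (i : M →ₗ[A] N) (p : N →ₗ[A] M) (hpi : p ∘ₗ i = LinearMap.id)
    (h : InAdd A X N) : InAdd A X M := by
  obtain ⟨n, i', p', hpi'⟩ := h
  refine ⟨n, i' ∘ₗ i, p ∘ₗ p', ?_⟩
  rw [LinearMap.comp_assoc, ← LinearMap.comp_assoc i, hpi', LinearMap.id_comp, hpi]

theorem trans (hXY : InAdd A X Y) (hYM : InAdd A Y M) : InAdd A X M := by
  obtain ⟨n, i, p, hpi⟩ := hXY
  obtain ⟨m, i', p', hpi'⟩ := hYM
  refine of_finite (ι := Fin m × Fin n)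
    ((LinearEquiv.curry A X _ _).symm.toLinearMap ∘ₗ i.compLeft (Fin m) ∘ₗ i')
    (p' ∘ₗ p.compLeft (Fin m) ∘ₗ (LinearEquiv.curry A X _ _).toLinearMap) ?_
  ext y
  have hpi_apply : ∀ v : Fin m → Y, p.compLeft (Fin m) (i.compLeft (Fin m) v) = v :=
    fun v => funext fun j => LinearMap.congr_fun hpi (v j)
  simpa [hpi_apply] using LinearMap.congr_fun hpi' y

theorem prod (hM : InAdd A X M) (hN : InAdd A X N) : InAdd A X (ModuleCat.of A (M × N)) := by
  obtain ⟨n, i, p, hpi⟩ := hM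
  obtain ⟨m, i', p', hpi'⟩ := hN
  let E := LinearEquiv.sumArrowLequivProdArrow (Fin n) (Fin m) A X
  refine of_finite (E.symm.toLinearMap ∘ₗ i.prodMap i') (p.prodMap p' ∘ₗ E.toLinearMap) ?_
  apply LinearMap.ext
  rintro ⟨x, y⟩
  simpa using ⟨LinearMap.congr_fun hpi x, LinearMap.congr_fun hpi' y⟩

end InAdd

section TwoTermResolution

variable {K Q M : ModuleCat.{0} A}

theorem isZero_moduleCat_punit : IsZero (ModuleCat.of A PUnit) :=
  ModuleCat.isZero_of_subsingleton _

def twoTermX (K Q : ModuleCat.{0} A) : ℕ → ModuleCat.{0} A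
  | 0 => Q
  | 1 => K
  | _ + 2 => ModuleCat.of A PUnit

def twoTermD (i : K ⟶ Q) : ∀ n : ℕ, twoTermX K Q (n + 1) ⟶ twoTermX K Q n
  | 0 => i
  | _ + 1 => 0

def twoTermComplex (i : K ⟶ Q) : ChainComplex (ModuleCat.{0} A) ℕ :=
  ChainComplex.of (twoTermX K Q) (twoTermD i) fun
    | 0 => zero_comp
    | _ + 1 => zero_comp

theorem twoTermComplex_d_one_zero (i : K ⟶ Q) : (twoTermComplex i).d 1 0 = i :=
  ChainComplex.of_d (twoTermX K Q) (twoTermD i) 0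

theorem twoTermComplex_d_two_one (i : K ⟶ Q) : (twoTermComplex i).d 2 1 = 0 :=
  ChainComplex.of_d (twoTermX K Q) (twoTermD i) 1

def twoTermResolution (i : K ⟶ Q) (p : Q ⟶ M) [Projective K] [Projective Q] [Mono i] [Epi p]
    (w : i ≫ p = 0) (hex : (ShortComplex.mk i p w).Exact) : ProjectiveResolution M where
  complex := twoTermComplex i
  projective
    | 0 => inferInstanceAs (Projective Q)
    | 1 => inferInstanceAs (Projective K)
    | _ + 2 => isZero_moduleCat_punit.projective
  π := (ChainComplex.toSingle₀Equiv _ _).symm ⟨p, by rw [twoTermComplex_d_one_zero]; exact w⟩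
  quasiIso := ⟨fun n => by
    cases n with
    | zero =>
      rw [ChainComplex.quasiIsoAt₀_iff, ShortComplex.quasiIso_iff_of_zeros']
      · refine (ShortComplex.exact_and_epi_g_iff_of_iso ?_).2 ⟨hex, inferInstance⟩
        refine ShortComplex.isoMk (Iso.refl _) (Iso.refl _) (Iso.refl _) ?_ ?_
        · simp only [Iso.refl_hom]
          exact (twoTermComplex_d_one_zero i).symm
        · simp [ChainComplex.toSingle₀Equiv]; rfl
      all_goals rfl
    | succ n =>
      rw [quasiIsoAt_iff_exactAt' _ _ (ChainComplex.exactAt_succ_single_obj _ _),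
        HomologicalComplex.exactAt_iff' _ (n + 2) (n + 1) n (by simp) (by simp)]
      cases n with
      | zero => exact (ShortComplex.exact_iff_mono _ (twoTermComplex_d_two_one i)).2 ‹Mono i›
      | succ m => exact ShortComplex.exact_of_isZero_X₂ _ isZero_moduleCat_punit⟩

end TwoTermResolution

/-- On the resolution `0 → K → Q` of `M`, `Ext¹(M, Y)` is the cokernel of
`Hom(Q, Y) → Hom(K, Y)`. -/
theorem extVanish_one_iff_forall_extend {K Q M : ModuleCat.{0} A} (Y : ModuleCat.{0} A)
    (hK : Module.Projective A K) (hQ : Module.Projective A Q) {i : K →ₗ[A] Q} {p : Q →ₗ[A] M}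
    (hi : Injective i) (hp : Surjective p) (hex : Exact i p) :
    ExtVanish A 1 M Y ↔ ∀ φ : K →ₗ[A] Y, ∃ Φ : Q →ₗ[A] Y, Φ ∘ₗ i = φ := by
  have : Projective K := (IsProjective.iff_projective K).mp hK
  have : Projective Q := (IsProjective.iff_projective Q).mp hQ
  have : Mono (ModuleCat.ofHom i) := (ModuleCat.mono_iff_injective _).mpr hi
  have : Epi (ModuleCat.ofHom p) := (ModuleCat.epi_iff_surjective _).mpr hp
  have w : ModuleCat.ofHom i ≫ ModuleCat.ofHom p = 0 := by
    ext x
    exact hex.apply_apply_eq_zero x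
  have hexS : (ShortComplex.mk _ _ w).Exact :=
    (ShortComplex.moduleCat_exact_iff _).2 fun x hx => (hex x).1 hx
  let R := twoTermResolution _ _ w hexS
  let C := HomologicalComplex.sc' (R.complex.linearYonedaObj ℤ Y) 0 1 2
  have hg : C.g = 0 :=
    (@ModuleCat.isZero_of_subsingleton ℤ _ _
      ⟨isZero_moduleCat_punit.eq_of_src (Y := Y)⟩).eq_of_tgt _ _
  have hf : ∀ Φ : Q ⟶ Y, C.f Φ = ModuleCat.ofHom i ≫ Φ := by
    intro Φ
    show (R.complex.linearYonedaObj ℤ Y).d 0 1 Φ = _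
    rw [ChainComplex.linearYonedaObj_d]
    show R.complex.d 1 0 ≫ Φ = _
    rw [show R.complex.d 1 0 = ModuleCat.ofHom i from twoTermComplex_d_one_zero _]
    rfl
  rw [ExtVanish, Iso.isZero_iff (R.isoExt 1 Y), ← HomologicalComplex.exactAt_iff_isZero_homology,
    HomologicalComplex.exactAt_iff' _ 0 1 2 (by simp) (by simp),
    ShortComplex.exact_iff_epi _ hg, ModuleCat.epi_iff_surjective]
  constructor
  · intro h φ
    obtain ⟨Φ, hΦ⟩ := h (ModuleCat.ofHom φ)
    exact ⟨Φ.hom, congrArg ModuleCat.Hom.hom ((hf Φ).symm.trans hΦ)⟩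
  · intro h φ
    obtain ⟨Φ, hΦ⟩ := h φ.hom
    exact ⟨ModuleCat.ofHom Φ, (hf _).trans (congrArg ModuleCat.ofHom hΦ)⟩

theorem projDimLE_one_of_exact {K Q M : ModuleCat.{0} A} (hK : Module.Projective A K)
    (hQ : Module.Projective A Q) {i : K →ₗ[A] Q} {p : Q →ₗ[A] M}
    (hi : Injective i) (hp : Surjective p) (hex : Exact i p) : ProjDimLE A 1 M :=
  ⟨K, ⟨K, ⟨Q, hQ, i, p, hi, hp, hex⟩, ⟨Iso.refl _⟩⟩, hK⟩

end

theorem stmt_10_general (A : Type) [Ring A]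
    (e f : A) (he : IsIdempotentElem e)
    (P : ModuleCat.{0} A) (hP : InAdd A (AeMod A e) P)
    (ι : (leftPartC A e) →ₗ[A] P) (π : P →ₗ[A] (A ⧸ idemIdeal A f))
    (hι : Function.Injective ι) (hπ : Function.Surjective π)
    (hexact : Function.Exact ι π)
    (hext1 : ExtVanish A 1 (quotMod A f) (quotMod A f))
    (hext2 : ExtVanish A 1 (quotMod A f) (AeMod A e)) :
    ProjDimLE A 1 (ModuleCat.of A ((leftPart A e) × (A ⧸ idemIdeal A f))) ∧
    ExtVanish A 1 (ModuleCat.of A ((leftPart A e) × (A ⧸ idemIdeal A f)))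
      (ModuleCat.of A ((leftPart A e) × (A ⧸ idemIdeal A f))) ∧
    ∃ (T0 T1 : ModuleCat.{0} A)
      (α : A →ₗ[A] T0) (β : T0 →ₗ[A] T1),
      InAdd A (ModuleCat.of A ((leftPart A e) × (A ⧸ idemIdeal A f))) T0 ∧
      InAdd A (ModuleCat.of A ((leftPart A e) × (A ⧸ idemIdeal A f))) T1 ∧
      Function.Injective α ∧ Function.Surjective β ∧ Function.Exact α β := by
  have hC := he.projective_leftPartC
  have hPproj : Module.Projective A P := hP.projective he.projective_leftPart
  have hAeP : Module.Projective A (ModuleCat.of A (leftPart A e × P)) :=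
    have := he.projective_leftPart; inferInstanceAs (Module.Projective A (leftPart A e × P))
  have hi : Injective (LinearMap.inr A (leftPart A e) P ∘ₗ ι) := LinearMap.inr_injective.comp hι
  have hp : Surjective (LinearMap.prodMap (LinearMap.id : leftPart A e →ₗ[A] _) π) :=
    fun ⟨x, q⟩ => (hπ q).elim fun p hp => ⟨(x, p), by simp [hp]⟩
  have hsyz := hexact.inr_comp_prodMap_id (X := leftPart A e)
  have extend (Y : ModuleCat.{0} A) := extVanish_one_iff_forall_extend
    (K := .of A (leftPartC A e)) (M := quotMod A f) Y hC hPproj hι hπ hexact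
  refine ⟨projDimLE_one_of_exact (K := .of A (leftPartC A e)) hC hAeP hi hp hsyz, ?_, ?_⟩
  · refine (extVanish_one_iff_forall_extend (K := .of A (leftPartC A e)) _ hC hAeP hi hp
      hsyz).2 fun φ => ?_
    obtain ⟨Φ₁, hΦ₁⟩ := (extend _).1 hext2 (LinearMap.fst A _ _ ∘ₗ φ)
    obtain ⟨Φ₂, hΦ₂⟩ := (extend _).1 hext1 (LinearMap.snd A _ _ ∘ₗ φ)
    refine ⟨Φ₁.prod Φ₂ ∘ₗ LinearMap.snd A _ P, ?_⟩
    exact LinearMap.ext fun x => Prod.ext (LinearMap.congr_fun hΦ₁ x) (LinearMap.congr_fun hΦ₂ x)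
  · have hAe : InAdd A (ModuleCat.of A (leftPart A e × (A ⧸ idemIdeal A f))) (AeMod A e) :=
      .of_retract (LinearMap.inl A _ _) (LinearMap.fst A (leftPart A e) (A ⧸ idemIdeal A f)) rfl
        (.self _)
    have hQ : InAdd A (ModuleCat.of A (leftPart A e × (A ⧸ idemIdeal A f))) (quotMod A f) :=
      .of_retract (LinearMap.inr A _ _) (LinearMap.snd A (leftPart A e) (A ⧸ idemIdeal A f)) rfl
        (.self _)
    refine ⟨ModuleCat.of A (leftPart A e × P), quotMod A f,
      LinearMap.prodMap LinearMap.id ι ∘ₗ he.peirceEquiv.toLinearMap, π ∘ₗ LinearMap.snd A _ P,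
      hAe.prod (hAe.trans hP), hQ,
      ?_, hπ.comp LinearMap.snd_surjective,
      LinearEquiv.precomp_exact_iff_exact.2 hexact.prodMap_id_snd_comp⟩
    exact (Prod.map_injective.2 ⟨injective_id, hι⟩).comp he.peirceEquiv.injective

/-- Under the stated hypotheses, `T = Ae ⊕ A/⟨f⟩` is a tilting module. -/
theorem stmt_10 (k A : Type) [Field k] [Ring A] [Algebra k A] [FiniteDimensional k A]
    (e f : A) (he : IsIdempotentElem e) (hf : IsIdempotentElem f)
    (P : ModuleCat.{0} A) (hP : InAdd A (AeMod A e) P)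
    (ι : (leftPartC A e) →ₗ[A] P) (π : P →ₗ[A] (A ⧸ idemIdeal A f))
    (hι : Function.Injective ι) (hπ : Function.Surjective π)
    (hexact : Function.Exact ι π)
    (hext1 : ExtVanish A 1 (quotMod A f) (quotMod A f))
    (hext2 : ExtVanish A 1 (quotMod A f) (AeMod A e)) :
    ProjDimLE A 1 (ModuleCat.of A ((leftPart A e) × (A ⧸ idemIdeal A f))) ∧
    ExtVanish A 1 (ModuleCat.of A ((leftPart A e) × (A ⧸ idemIdeal A f)))
      (ModuleCat.of A ((leftPart A e) × (A ⧸ idemIdeal A f))) ∧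
    ∃ (T0 T1 : ModuleCat.{0} A)
      (α : A →ₗ[A] T0) (β : T0 →ₗ[A] T1),
      InAdd A (ModuleCat.of A ((leftPart A e) × (A ⧸ idemIdeal A f))) T0 ∧
      InAdd A (ModuleCat.of A ((leftPart A e) × (A ⧸ idemIdeal A f))) T1 ∧
      Function.Injective α ∧ Function.Surjective β ∧ Function.Exact α β :=
  stmt_10_general A e f he P hP ι π hι hπ hexact hext1 hext2

end
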